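/- Let S be a finite set of endomorphisms of projective N-space over the algebraic closure of Q, all of degree at least 2, let ν be a strictly positive probability measure on S, and let (Φ_S, ν̄) be the space of i.i.d. sequences distributed according to ν. Then a point P ∈ P^N(Q̄) is almost surely wandering for (S, ν) if and only if the expected canonical height E_ν̄[ĥ](Q) is strictly positive for every point Q in the S-orbit Orb_S(P). Equivalently, P fails to be almost surely wandering if and only if some Q ∈ Orb_S(P) has finite S-orbit. -/

import Mathlib

/-!
Statement 7 (Theorem `a.s`): characterization of almost surely wandering points
via the expected canonical height.

Abstract model: `Pt` is `ℙ^N(ℚ̄)`, `M` the monoid of endomorphisms acting on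
`Pt`, `deg : M → ℕ` the (multiplicative) degree, `h : Pt → ℝ` the absolute Weil
height (nonnegative, with a uniform functoriality constant `C` for the finitely
many maps in `S`, and satisfying Northcott-type finiteness on orbits: orbits lie
in `ℙ^N(K)` for a fixed number field `K`, so their subsets of bounded height are
finite).

`S` is a finite set of endomorphisms of degree ≥ 2, given by `F : S → M`; `ν`
is a strictly positive probability measure on `S`; `Φ_S = ℕ → S` carries the
i.i.d. product measure `μ = ν̄` (characterized on cylinder sets).

`seqOrbit F P γ` is `Orb_γ(P)`; `totalOrbit F P = Orb_S(P) = ⋃_γ Orb_γ(P)`;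
`hhat F deg h γ Q = ĥ_γ(Q) = lim_n h(γ_n(Q))/deg(γ_n)` (written as a `limsup`,
which is the limit since the limit exists for height controlled `S`); the
expected canonical height is `E_ν̄[ĥ](Q) = ∫ ĥ_γ(Q) dν̄(γ)`.
-/

open MeasureTheory Filter

/-- `γ_n = θ_n ∘ θ_{n-1} ∘ ⋯ ∘ θ_1` for the sequence `γ = (θ_1, θ_2, …)`,
`θ_{i+1} = γ i`; by convention `γ_0 = id`. -/
def seqComp {S M : Type*} [Monoid M] (F : S → M) (γ : ℕ → S) : ℕ → M
  | 0 => 1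
  | n + 1 => F (γ n) * seqComp F γ n

/-- `Orb_γ(P) = {P, γ_1(P), γ_2(P), …}`. -/
def seqOrbit {S Pt M : Type*} [Monoid M] [MulAction M Pt]
    (F : S → M) (P : Pt) (γ : ℕ → S) : Set Pt :=
  Set.range fun n : ℕ => seqComp F γ n • P

/-- The total `S`-orbit `Orb_S(P) = ⋃_{γ ∈ Φ_S} Orb_γ(P)`. -/
def totalOrbit {S Pt M : Type*} [Monoid M] [MulAction M Pt]
    (F : S → M) (P : Pt) : Set Pt :=
  ⋃ γ : ℕ → S, seqOrbit F P γ

/-- The canonical height `ĥ_γ(Q) = lim_n h(γ_n(Q))/deg(γ_n)` of the pair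
`(γ, Q)` (the limit exists since `S` is height controlled, so it equals this
`limsup`). -/
noncomputable def hhat {S Pt M : Type*} [Monoid M] [MulAction M Pt]
    (F : S → M) (deg : M → ℕ) (h : Pt → ℝ) (γ : ℕ → S) (Q : Pt) : ℝ :=
  limsup (fun n : ℕ => h (seqComp F γ n • Q) / (deg (seqComp F γ n) : ℝ)) atTop

/-!
Telescoping `h(γ_{n+1}(Q))/deg γ_{n+1} - h(γ_n(Q))/deg γ_n` gives `|ĥ_γ(Q) - h(Q)| ≤ C`; applied to
the tail of `γ` it shows that `ĥ_γ(Q) = 0` forces `h(γ_n(Q)) ≤ C` for every `n`. So if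
`E_ν̄[ĥ](Q) = 0`, almost every random orbit of `Q`, hence (cylinders having positive mass) every
one, stays among the finitely many orbit points of height `≤ C`. Conversely a point `γ'_m(P)` with
finite `S`-orbit makes every `γ` beginning like `γ'` non-wandering, a set of positive measure.

If no point of `Orb_S(P)` has finite `S`-orbit, every point of the finite set `T` of orbit points of
height `≤ C` leaves `T` along some word of length `≤ L`. Each block of `L` letters spells the word
attached to the current point with probability `≥ δ > 0`, so the orbit stays in `T` during `k`
blocks with probability `≤ (1 - δ)^k`, and `P` is almost surely wandering.
-/

open Set Topology
open scoped ENNReal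

section Orbits

variable {S Pt M : Type*} [Monoid M] [MulAction M Pt] (F : S → M)

theorem seqComp_congr {γ γ' : ℕ → S} {n : ℕ} (hγ : EqOn γ γ' (Iio n)) :
    seqComp F γ n = seqComp F γ' n := by
  induction n with
  | zero => rfl
  | succ n ih =>
    simp only [seqComp, hγ (Nat.lt_succ_self n), ih (hγ.mono (Iio_subset_Iio n.le_succ))]

theorem seqComp_add (γ : ℕ → S) (n m : ℕ) :
    seqComp F γ (n + m) = seqComp F (fun i => γ (n + i)) m * seqComp F γ n := by
  induction m with
  | zero => simp [seqComp]
  | succ m ih => rw [← add_assoc, seqComp, ih, ← mul_assoc]; rfl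

theorem seqComp_smul_mem_totalOrbit (P : Pt) (γ : ℕ → S) (n : ℕ) :
    seqComp F γ n • P ∈ totalOrbit F P :=
  mem_iUnion.2 ⟨γ, n, rfl⟩

theorem seqOrbit_subset_totalOrbit (P : Pt) (γ : ℕ → S) : seqOrbit F P γ ⊆ totalOrbit F P :=
  subset_iUnion (seqOrbit F P) γ

theorem seqOrbit_finite_of_shift {P : Pt} {γ : ℕ → S} (n : ℕ)
    (hfin : (seqOrbit F (seqComp F γ n • P) fun i => γ (n + i)).Finite) :
    (seqOrbit F P γ).Finite := by
  refine (((finite_Iio n).image fun m => seqComp F γ m • P).union hfin).subset ?_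
  rintro _ ⟨m, rfl⟩
  rcases lt_or_ge m n with hm | hm
  · exact Or.inl ⟨m, hm, rfl⟩
  · obtain ⟨k, rfl⟩ := Nat.exists_eq_add_of_le hm
    exact Or.inr ⟨k, by simp only [seqComp_add, mul_smul]⟩

end Orbits

section CanonicalHeight

variable {S Pt M : Type*} [Monoid M] [MulAction M Pt] {F : S → M} {deg : M →* ℕ} {h : Pt → ℝ}
  {C : ℝ}

noncomputable def heightRatio (F : S → M) (deg : M → ℕ) (h : Pt → ℝ) (γ : ℕ → S) (Q : Pt)
    (n : ℕ) : ℝ :=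
  h (seqComp F γ n • Q) / (deg (seqComp F γ n) : ℝ)

variable (hdeg : ∀ s, 2 ≤ deg (F s))
include hdeg

theorem two_pow_le_deg_seqComp (γ : ℕ → S) (n : ℕ) :
    2 ^ n ≤ deg (seqComp F γ n) := by
  induction n with
  | zero => simp [seqComp]
  | succ n ih =>
    rw [seqComp, map_mul, pow_succ']
    exact Nat.mul_le_mul (hdeg _) ih

theorem deg_seqComp_pos (γ : ℕ → S) (n : ℕ) :
    0 < deg (seqComp F γ n) :=
  lt_of_lt_of_le (by positivity) (two_pow_le_deg_seqComp hdeg γ n)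

variable (hC : ∀ s Q, |h (F s • Q) - deg (F s) * h Q| ≤ C)
include hC

theorem abs_heightRatio_succ_sub_le (γ : ℕ → S) (Q : Pt) (k : ℕ) :
    |heightRatio F deg h γ Q (k + 1) - heightRatio F deg h γ Q k| ≤ C / 2 ^ (k + 1) := by
  set R := seqComp F γ k • Q
  have hdeg_succ := two_pow_le_deg_seqComp hdeg γ (k + 1)
  rw [seqComp, map_mul] at hdeg_succ
  have hpos : (0 : ℝ) < deg (F (γ k)) * deg (seqComp F γ k) := by
    exact_mod_cast lt_of_lt_of_le (by positivity) hdeg_succ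
  have he : (deg (F (γ k)) : ℝ) ≠ 0 := by
    exact_mod_cast (lt_of_lt_of_le two_pos (hdeg (γ k))).ne'
  have hdiff : heightRatio F deg h γ Q (k + 1) - heightRatio F deg h γ Q k
      = (h (F (γ k) • R) - deg (F (γ k)) * h R) / (deg (F (γ k)) * deg (seqComp F γ k)) := by
    simp only [heightRatio, seqComp, map_mul, mul_smul, Nat.cast_mul]
    rw [← mul_div_mul_left (h R) _ he, sub_div]
  have hC0 : 0 ≤ C := (abs_nonneg _).trans (hC (γ k) R)
  rw [hdiff, abs_div, abs_of_pos hpos]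
  gcongr
  · exact hC _ _
  · exact_mod_cast hdeg_succ

theorem dist_heightRatio_succ_le (γ : ℕ → S) (Q : Pt) (k : ℕ) :
    dist (heightRatio F deg h γ Q k) (heightRatio F deg h γ Q (k + 1)) ≤ C / 2 * (1 / 2) ^ k := by
  rw [dist_comm, Real.dist_eq]
  convert abs_heightRatio_succ_sub_le hdeg hC γ Q k using 1
  rw [one_div, inv_pow, pow_succ]
  field_simp

theorem tendsto_heightRatio (γ : ℕ → S) (Q : Pt) :
    Tendsto (heightRatio F deg h γ Q) atTop (𝓝 (hhat F deg h γ Q)) := by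
  obtain ⟨x, hx⟩ := cauchySeq_tendsto_of_complete <|
    cauchySeq_of_le_geometric _ _ (by norm_num) (dist_heightRatio_succ_le hdeg hC γ Q)
  have hlim : hhat F deg h γ Q = x := hx.limsup_eq
  rwa [hlim]

theorem abs_hhat_sub_le (γ : ℕ → S) (Q : Pt) :
    |hhat F deg h γ Q - h Q| ≤ C := by
  have := dist_le_of_le_geometric_of_tendsto₀ _ _ (by norm_num)
    (dist_heightRatio_succ_le hdeg hC γ Q) (tendsto_heightRatio hdeg hC γ Q)
  rw [dist_comm, Real.dist_eq] at this
  norm_num [heightRatio, seqComp] at this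
  convert this using 1
  ring

theorem hhat_eq_hhat_shift_div (γ : ℕ → S) (Q : Pt) (n : ℕ) :
    hhat F deg h γ Q =
      hhat F deg h (fun i => γ (n + i)) (seqComp F γ n • Q) / deg (seqComp F γ n) := by
  have hshift : (fun m => heightRatio F deg h γ Q (m + n)) = fun m =>
      heightRatio F deg h (fun i => γ (n + i)) (seqComp F γ n • Q) m / deg (seqComp F γ n) := by
    ext m
    simp only [heightRatio, add_comm m n, seqComp_add, map_mul, mul_smul, Nat.cast_mul, div_div]
  refine tendsto_nhds_unique ((tendsto_add_atTop_iff_nat n).2 (tendsto_heightRatio hdeg hC γ Q)) ?_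
  rw [hshift]
  exact (tendsto_heightRatio hdeg hC _ _).div_const _

theorem height_le_of_hhat_eq_zero {γ : ℕ → S} {Q : Pt}
    (hzero : hhat F deg h γ Q = 0) (n : ℕ) : h (seqComp F γ n • Q) ≤ C := by
  have hd : (deg (seqComp F γ n) : ℝ) ≠ 0 := by exact_mod_cast (deg_seqComp_pos hdeg γ n).ne'
  rw [hhat_eq_hhat_shift_div hdeg hC γ Q n, div_eq_zero_iff, or_iff_left hd] at hzero
  have := abs_hhat_sub_le hdeg hC (fun i => γ (n + i)) (seqComp F γ n • Q)
  rw [hzero, zero_sub, abs_neg] at this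
  exact (le_abs_self _).trans this

theorem hhat_nonneg (hh : ∀ Q, 0 ≤ h Q) (γ : ℕ → S) (Q : Pt) :
    0 ≤ hhat F deg h γ Q :=
  ge_of_tendsto' (tendsto_heightRatio hdeg hC γ Q) fun _ => div_nonneg (hh _) (Nat.cast_nonneg _)

theorem hhat_eq_zero_of_finite {γ : ℕ → S} {Q : Pt}
    (hfin : (seqOrbit F Q γ).Finite) : hhat F deg h γ Q = 0 := by
  obtain ⟨B, hB⟩ := (hfin.image fun R => |h R|).bddAbove
  have hbound : ∀ n, |h (seqComp F γ n • Q)| ≤ B := fun n => hB ⟨_, ⟨n, rfl⟩, rfl⟩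
  have hB0 : 0 ≤ B := (abs_nonneg _).trans (hbound 0)
  refine tendsto_nhds_unique (tendsto_heightRatio hdeg hC γ Q)
    (squeeze_zero_norm (a := fun n => B * (1 / 2) ^ n) (fun n => ?_) ?_)
  · rw [Real.norm_eq_abs, heightRatio, abs_div, Nat.abs_cast, one_div_pow, mul_one_div]
    exact div_le_div₀ hB0 (hbound n) (by positivity)
      (by exact_mod_cast two_pow_le_deg_seqComp hdeg γ n)
  · simpa using (tendsto_pow_atTop_nhds_zero_of_lt_one (by norm_num : (0 : ℝ) ≤ 1 / 2)
      (by norm_num)).const_mul B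

end CanonicalHeight

section Cylinders

variable {S : Type*}

def prefixWord (n : ℕ) (γ : ℕ → S) : Fin n → S := fun i => γ i

def blockWord (n L : ℕ) (γ : ℕ → S) : Fin L → S := prefixWord L fun i => γ (n + i)

theorem prefixWord_eq_prefixWord_iff {n : ℕ} {γ γ' : ℕ → S} :
    prefixWord n γ = prefixWord n γ' ↔ EqOn γ γ' (Iio n) :=
  ⟨fun h i hi => congrFun h ⟨i, hi⟩, fun h => funext fun i => h i.isLt⟩

theorem prefixWord_add (n L : ℕ) (γ : ℕ → S) :
    prefixWord (n + L) γ = Fin.append (prefixWord n γ) (blockWord n L γ) := by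
  ext i
  induction i using Fin.addCases <;> simp [prefixWord, blockWord]

theorem blockWord_eq_of_eqOn {n L N : ℕ} {γ γ' : ℕ → S} (hγ : EqOn γ γ' (Iio N))
    (hN : n + L ≤ N) : blockWord n L γ = blockWord n L γ' :=
  funext fun i => hγ (show n + i < N by omega)

theorem preimage_prefixWord_image {n : ℕ} {A : Set (ℕ → S)}
    (hA : ∀ γ γ', EqOn γ γ' (Iio n) → γ ∈ A → γ' ∈ A) :
    prefixWord n ⁻¹' (prefixWord n '' A) = A :=
  Subset.antisymm (fun _ ⟨γ, hγ, hpre⟩ => hA γ _ (prefixWord_eq_prefixWord_iff.1 hpre) hγ)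
    (subset_preimage_image _ _)

variable [MeasurableSpace S]

theorem measurable_prefixWord (n : ℕ) : Measurable (prefixWord (S := S) n) :=
  measurable_pi_lambda _ fun _ => measurable_pi_apply _

theorem measurable_of_eqOn_Iio [Finite S] [MeasurableSingletonClass S] {β : Type*}
    [MeasurableSpace β] {n : ℕ} {f : (ℕ → S) → β}
    (hf : ∀ γ γ', EqOn γ γ' (Iio n) → f γ = f γ') : Measurable f := fun B _ => by
  rw [← preimage_prefixWord_image (A := f ⁻¹' B) fun γ γ' hγ hB => by
    rwa [mem_preimage, ← hf γ γ' hγ]]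
  exact measurable_prefixWord n (toFinite _).measurableSet

variable (ν : Measure S) {μ : Measure (ℕ → S)}

noncomputable def wordMass {n : ℕ} (u : Fin n → S) : ℝ≥0∞ := ∏ i, ν {u i}

theorem wordMass_append {n L : ℕ} (u : Fin n → S) (e : Fin L → S) :
    wordMass ν (Fin.append u e) = wordMass ν u * wordMass ν e := by
  simp [wordMass, Fin.prod_univ_add]

variable {ν}

theorem wordMass_pos (hpos : ∀ s, 0 < ν {s}) {n : ℕ} (u : Fin n → S) : 0 < wordMass ν u :=
  CanonicallyOrderedAdd.prod_pos.2 fun i _ => hpos (u i)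

variable (hiid : ∀ (n : ℕ) (A : Fin n → Set S), μ {γ | ∀ i : Fin n, γ i ∈ A i} = ∏ i, ν (A i))
include hiid

theorem measure_preimage_prefixWord_singleton {n : ℕ} (u : Fin n → S) :
    μ (prefixWord n ⁻¹' {u}) = wordMass ν u := by
  rw [wordMass, ← hiid n fun i => {u i}]
  congr 1
  ext γ
  simp [prefixWord, funext_iff]

theorem measure_preimage_prefixWord [MeasurableSingletonClass S] {n : ℕ} (U : Finset (Fin n → S)) :
    μ (prefixWord n ⁻¹' U) = ∑ u ∈ U, wordMass ν u := by
  rw [← sum_measure_preimage_singleton U fun u _ =>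
    measurable_prefixWord n (measurableSet_singleton u)]
  exact Finset.sum_congr rfl fun u _ => measure_preimage_prefixWord_singleton hiid u

theorem exists_eqOn_Iio_of_ae (hpos : ∀ s, 0 < ν {s}) {p : (ℕ → S) → Prop} (hp : ∀ᵐ γ ∂μ, p γ)
    (γ' : ℕ → S) (n : ℕ) : ∃ γ, EqOn γ γ' (Iio n) ∧ p γ := by
  by_contra! hnone
  have hnull : μ (prefixWord n ⁻¹' {prefixWord n γ'}) = 0 :=
    measure_mono_null (fun γ hγ => hnone γ (prefixWord_eq_prefixWord_iff.1 hγ)) (ae_iff.1 hp)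
  rw [measure_preimage_prefixWord_singleton hiid] at hnull
  exact (wordMass_pos hpos _).ne' hnull

end Cylinders

section Blocks

variable {S : Type*} [MeasurableSpace S] [MeasurableSingletonClass S] {ν : Measure S}
  {μ : Measure (ℕ → S)} [IsFiniteMeasure μ]
  (hiid : ∀ (n : ℕ) (A : Fin n → Set S), μ {γ | ∀ i : Fin n, γ i ∈ A i} = ∏ i, ν (A i))
include hiid

theorem measure_blockWord_ne_le {n L : ℕ} (U : Finset (Fin n → S)) (f : (Fin n → S) → Fin L → S)
    {δ : ℝ≥0∞} (hδ : ∀ u ∈ U, δ ≤ wordMass ν (f u)) :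
    μ {γ | prefixWord n γ ∈ U ∧ blockWord n L γ ≠ f (prefixWord n γ)} ≤
      (1 - δ) * μ (prefixWord n ⁻¹' U) := by
  classical
  set A := prefixWord n ⁻¹' (U : Set (Fin n → S))
  set B := prefixWord (n + L) ⁻¹' (U.image fun u => Fin.append u (f u) : Set (Fin (n + L) → S))
  have happend : ∀ u u' (e e' : Fin L → S), Fin.append u e = Fin.append u' e' → u = u' ∧ e = e' :=
    fun u u' e e' huu' => Prod.ext_iff.1 <| (Fin.appendEquiv n L).injective
      (show Fin.appendEquiv n L (u, e) = Fin.appendEquiv n L (u', e') from huu')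
  have hB : B = {γ | prefixWord n γ ∈ U ∧ blockWord n L γ = f (prefixWord n γ)} := by
    ext γ
    simp only [B, mem_preimage, Finset.coe_image, mem_image, Finset.mem_coe, prefixWord_add,
      mem_ofPred_eq]
    constructor
    · rintro ⟨u, hu, huγ⟩
      obtain ⟨rfl, hfu⟩ := happend _ _ _ _ huγ
      exact ⟨hu, hfu.symm⟩
    · rintro ⟨hu, hblock⟩
      exact ⟨_, hu, by rw [hblock]⟩
  have hmass : δ * μ A ≤ μ B := by
    rw [measure_preimage_prefixWord hiid, measure_preimage_prefixWord hiid,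
      Finset.sum_image fun u _ u' _ huu' => (happend _ _ _ _ huu').1, Finset.mul_sum]
    refine Finset.sum_le_sum fun u hu => ?_
    rw [wordMass_append, mul_comm]
    gcongr
    exact hδ u hu
  have hdiff : {γ | prefixWord n γ ∈ U ∧ blockWord n L γ ≠ f (prefixWord n γ)} = A \ B := by
    rw [hB]
    ext γ
    simp only [mem_ofPred_eq, Set.mem_sdiff, mem_preimage, Finset.mem_coe, A]
    tauto
  have hBA : B ⊆ A := by
    rw [hB]
    exact fun γ hγ => hγ.1
  rw [hdiff, measure_sdiff hBA
      (measurable_prefixWord _ (Finset.measurableSet _)).nullMeasurableSet (measure_ne_top μ B),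
    ENNReal.sub_mul fun _ _ => measure_ne_top μ A, one_mul]
  exact tsub_le_tsub_left hmass _

theorem measure_sep_blockWord_ne_le [Finite S] [Nonempty S] {n L : ℕ} {A : Set (ℕ → S)}
    {g : (ℕ → S) → Fin L → S} {δ : ℝ≥0∞}
    (hA : ∀ γ γ', EqOn γ γ' (Iio n) → γ ∈ A → γ' ∈ A)
    (hg : ∀ γ γ', EqOn γ γ' (Iio n) → g γ = g γ') (hδ : ∀ γ ∈ A, δ ≤ wordMass ν (g γ)) :
    μ {γ ∈ A | blockWord n L γ ≠ g γ} ≤ (1 - δ) * μ A := by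
  set f := g ∘ Function.invFun (prefixWord n)
  have hgf : ∀ γ, g γ = f (prefixWord n γ) := fun γ =>
    hg _ _ (prefixWord_eq_prefixWord_iff.1 (Function.invFun_eq ⟨γ, rfl⟩).symm)
  set U := (toFinite (prefixWord n '' A)).toFinset
  have hAU : prefixWord n ⁻¹' U = A := by
    rw [Finite.coe_toFinset]
    exact preimage_prefixWord_image hA
  have hδU : ∀ u ∈ U, δ ≤ wordMass ν (f u) := by
    intro u hu
    obtain ⟨γ, hγ, rfl⟩ := (Finite.mem_toFinset _).1 hu
    rw [← hgf]
    exact hδ γ hγ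
  have hsep : {γ ∈ A | blockWord n L γ ≠ g γ} =
      {γ | prefixWord n γ ∈ U ∧ blockWord n L γ ≠ f (prefixWord n γ)} := by
    ext γ
    simp only [mem_ofPred_eq, ← hgf, ← hAU]
    rfl
  rw [hsep, ← hAU]
  exact measure_blockWord_ne_le hiid U f hδU

end Blocks

section Escape

variable {S Pt M : Type*} [Monoid M] [MulAction M Pt] (F : S → M)

theorem exists_escapeWord [Nonempty S] {T : Set Pt} (hT : T.Finite)
    (hesc : ∀ Q ∈ T, ¬ totalOrbit F Q ⊆ T) :
    ∃ (L : ℕ) (e : Pt → Fin L → S), ∀ Q ∈ T, ∀ γ : ℕ → S, prefixWord L γ = e Q →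
      ∃ m ≤ L, seqComp F γ m • Q ∉ T := by
  have hexit : ∀ Q, ∃ (w : ℕ → S) (m : ℕ), Q ∈ T → seqComp F w m • Q ∉ T := by
    intro Q
    by_cases hQ : Q ∈ T
    · obtain ⟨_, ⟨_, ⟨w, rfl⟩, m, rfl⟩, hout⟩ := not_subset.1 (hesc Q hQ)
      exact ⟨w, m, fun _ => hout⟩
    · exact ⟨Classical.arbitrary _, 0, fun h => absurd h hQ⟩
  choose w m hw using hexit
  refine ⟨hT.toFinset.sup m, fun Q => prefixWord _ (w Q), fun Q hQ γ hγ => ?_⟩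
  have hmL := Finset.le_sup (f := m) (hT.mem_toFinset.2 hQ)
  refine ⟨m Q, hmL, ?_⟩
  rw [seqComp_congr F ((prefixWord_eq_prefixWord_iff.1 hγ).mono (Iio_subset_Iio hmL))]
  exact hw Q hQ

def blockAvoiding (P : Pt) (T : Set Pt) {L : ℕ} (e : Pt → Fin L → S) (k : ℕ) : Set (ℕ → S) :=
  {γ | ∀ j < k, seqComp F γ (j * L) • P ∈ T ∧ blockWord (j * L) L γ ≠ e (seqComp F γ (j * L) • P)}

theorem setOf_forall_mem_subset_blockAvoiding {P : Pt} {T : Set Pt} {L : ℕ} {e : Pt → Fin L → S}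
    (he : ∀ Q ∈ T, ∀ γ : ℕ → S, prefixWord L γ = e Q → ∃ m ≤ L, seqComp F γ m • Q ∉ T) (k : ℕ) :
    {γ | ∀ n, seqComp F γ n • P ∈ T} ⊆ blockAvoiding F P T e k := by
  intro γ hγ j _
  refine ⟨hγ _, fun hblock => ?_⟩
  obtain ⟨m, -, hm⟩ := he _ (hγ _) (fun i => γ (j * L + i)) hblock
  rw [← mul_smul, ← seqComp_add] at hm
  exact hm (hγ _)

theorem blockAvoiding_succ (P : Pt) (T : Set Pt) {L : ℕ} (e : Pt → Fin L → S) (k : ℕ) :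
    blockAvoiding F P T e (k + 1) =
      {γ ∈ blockAvoiding F P T e k ∩ {γ | seqComp F γ (k * L) • P ∈ T} |
        blockWord (k * L) L γ ≠ e (seqComp F γ (k * L) • P)} := by
  ext γ
  simp only [blockAvoiding, Nat.forall_lt_succ_right, mem_ofPred_eq, mem_inter_iff]
  tauto

theorem mem_blockAvoiding_of_eqOn {P : Pt} {T : Set Pt} {L : ℕ} {e : Pt → Fin L → S} {k : ℕ}
    {γ γ' : ℕ → S} (hγ : EqOn γ γ' (Iio (k * L))) (hmem : γ ∈ blockAvoiding F P T e k) :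
    γ' ∈ blockAvoiding F P T e k := by
  intro j hj
  rw [← seqComp_congr F (hγ.mono (Iio_subset_Iio (Nat.mul_le_mul_right L hj.le))),
    ← blockWord_eq_of_eqOn hγ (by nlinarith)]
  exact hmem j hj

theorem measure_blockAvoiding_le [Finite S] [Nonempty S] [MeasurableSpace S]
    [MeasurableSingletonClass S] {ν : Measure S} {μ : Measure (ℕ → S)} [IsProbabilityMeasure μ]
    (hiid : ∀ (n : ℕ) (A : Fin n → Set S), μ {γ | ∀ i : Fin n, γ i ∈ A i} = ∏ i, ν (A i))
    {P : Pt} {T : Set Pt} {L : ℕ} {e : Pt → Fin L → S} {δ : ℝ≥0∞}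
    (hδ : ∀ Q ∈ T, δ ≤ wordMass ν (e Q)) (k : ℕ) :
    μ (blockAvoiding F P T e k) ≤ (1 - δ) ^ k := by
  induction k with
  | zero => simp [blockAvoiding]
  | succ k ih =>
    have hstate : ∀ {γ γ' : ℕ → S}, EqOn γ γ' (Iio (k * L)) →
        seqComp F γ (k * L) • P = seqComp F γ' (k * L) • P := fun hγ => by
      rw [seqComp_congr F hγ]
    rw [blockAvoiding_succ, pow_succ']
    refine (measure_sep_blockWord_ne_le hiid ?_ (fun γ γ' hγ => by rw [hstate hγ])
      fun γ hγ => hδ _ hγ.2).trans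
      (mul_le_mul_of_nonneg_left ((measure_mono inter_subset_left).trans ih) zero_le)
    rintro γ γ' hγ ⟨hγavoid, hγT⟩
    exact ⟨mem_blockAvoiding_of_eqOn F hγ hγavoid, by rwa [mem_ofPred_eq, ← hstate hγ]⟩

theorem measure_forall_seqComp_smul_mem_eq_zero [Finite S] [MeasurableSpace S]
    [MeasurableSingletonClass S] {ν : Measure S} {μ : Measure (ℕ → S)} [IsProbabilityMeasure μ]
    (hiid : ∀ (n : ℕ) (A : Fin n → Set S), μ {γ | ∀ i : Fin n, γ i ∈ A i} = ∏ i, ν (A i))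
    (hpos : ∀ s, 0 < ν {s}) {T : Set Pt} (hT : T.Finite) (hesc : ∀ Q ∈ T, ¬ totalOrbit F Q ⊆ T)
    (P : Pt) : μ {γ | ∀ n, seqComp F γ n • P ∈ T} = 0 := by
  have : Nonempty S := ⟨(nonempty_of_isProbabilityMeasure μ).some 0⟩
  obtain ⟨L, e, he⟩ := exists_escapeWord F hT hesc
  set δ := hT.toFinset.inf fun Q => wordMass ν (e Q)
  have hδ : δ ≠ 0 := ((Finset.lt_inf_iff ENNReal.zero_lt_top).2 fun Q _ => wordMass_pos hpos _).ne'
  have hδle : ∀ Q ∈ T, δ ≤ wordMass ν (e Q) := fun Q hQ =>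
    Finset.inf_le (f := fun Q => wordMass ν (e Q)) (hT.mem_toFinset.2 hQ)
  refine le_antisymm (ge_of_tendsto' (ENNReal.tendsto_pow_atTop_nhds_zero_of_lt_one
    (ENNReal.sub_lt_self ENNReal.one_ne_top one_ne_zero hδ)) fun k => ?_) zero_le
  exact (measure_mono (setOf_forall_mem_subset_blockAvoiding F he k)).trans
    (measure_blockAvoiding_le F hiid hδle k)

end Escape

section ExpectedHeight

variable {S Pt M : Type*} [Monoid M] [MulAction M Pt] [Finite S] [MeasurableSpace S]
  [MeasurableSingletonClass S] {F : S → M} {h : Pt → ℝ} {C : ℝ} {ν : Measure S}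
  {μ : Measure (ℕ → S)}

theorem measurable_hhat (deg : M → ℕ) (Q : Pt) : Measurable fun γ => hhat F deg h γ Q :=
  Measurable.limsup fun _ => measurable_of_eqOn_Iio fun _ _ hγ => by
    rw [seqComp_congr F hγ]

variable {deg : M →* ℕ} (hdeg : ∀ s, 2 ≤ deg (F s))
  (hC : ∀ s Q, |h (F s • Q) - deg (F s) * h Q| ≤ C)
include hdeg hC

theorem integrable_hhat [IsFiniteMeasure μ] (Q : Pt) :
    Integrable (fun γ => hhat F deg h γ Q) μ :=
  Integrable.of_bound (measurable_hhat deg Q).aestronglyMeasurable (|h Q| + C) <|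
    ae_of_all _ fun γ => by
      have := abs_hhat_sub_le hdeg hC γ Q
      have := abs_sub_abs_le_abs_sub (hhat F deg h γ Q) (h Q)
      rw [Real.norm_eq_abs]
      linarith

variable (hiid : ∀ (n : ℕ) (A : Fin n → Set S), μ {γ | ∀ i : Fin n, γ i ∈ A i} = ∏ i, ν (A i))
  (hpos : ∀ s, 0 < ν {s})
include hiid hpos

theorem integral_hhat_eq_zero_iff [IsFiniteMeasure μ] (hh : ∀ Q, 0 ≤ h Q) {Q : Pt}
    (hNorthcott : {R ∈ totalOrbit F Q | h R ≤ C}.Finite) :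
    ∫ γ, hhat F deg h γ Q ∂μ = 0 ↔ (totalOrbit F Q).Finite := by
  constructor
  · intro hzero
    have hae : ∀ᵐ γ ∂μ, hhat F deg h γ Q = 0 :=
      (integral_eq_zero_iff_of_nonneg (fun γ => hhat_nonneg hdeg hC hh γ Q)
        (integrable_hhat hdeg hC Q)).1 hzero
    refine hNorthcott.subset fun R hR => ⟨hR, ?_⟩
    obtain ⟨_, ⟨γ', rfl⟩, n, rfl⟩ := hR
    obtain ⟨γ, hγ, hγzero⟩ := exists_eqOn_Iio_of_ae hiid hpos hae γ' n
    show h (seqComp F γ' n • Q) ≤ C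
    rw [← seqComp_congr F hγ]
    exact height_le_of_hhat_eq_zero hdeg hC hγzero n
  · intro hfin
    simp_rw [hhat_eq_zero_of_finite hdeg hC (hfin.subset (seqOrbit_subset_totalOrbit F Q _))]
    exact integral_zero _ _

theorem measure_seqOrbit_finite_ne_zero_iff [IsProbabilityMeasure μ] {P : Pt}
    (hNorthcott : {R ∈ totalOrbit F P | h R ≤ C}.Finite) :
    μ {γ | (seqOrbit F P γ).Finite} ≠ 0 ↔ ∃ Q ∈ totalOrbit F P, (totalOrbit F Q).Finite := by
  constructor
  · intro hne
    by_contra! hinf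
    refine hne (measure_mono_null ?_ (measure_forall_seqComp_smul_mem_eq_zero F hiid hpos
      hNorthcott (fun Q hQ hsub => hinf Q hQ.1 (hNorthcott.subset hsub)) P))
    intro γ hγ n
    exact ⟨seqComp_smul_mem_totalOrbit F P γ n,
      height_le_of_hhat_eq_zero hdeg hC (hhat_eq_zero_of_finite hdeg hC hγ) n⟩
  · rintro ⟨_, ⟨_, ⟨γ', rfl⟩, n, rfl⟩, hfin⟩ hnull
    obtain ⟨γ, hγ, hγinf⟩ := exists_eqOn_Iio_of_ae hiid hpos
      ((ae_iff (p := fun γ => ¬(seqOrbit F P γ).Finite)).2 (by simpa using hnull)) γ' n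
    refine hγinf (seqOrbit_finite_of_shift F n (hfin.subset ?_))
    rw [seqComp_congr F hγ]
    exact seqOrbit_subset_totalOrbit F _ _

end ExpectedHeight

theorem almost_surely_wandering_iff_expected_canonical_height_pos_general
    {S Pt M : Type*} [Monoid M] [MulAction M Pt] [Fintype S]
    [MeasurableSpace S] [DiscreteMeasurableSpace S]
    -- the finite set `S` of endomorphisms of `ℙ^N(ℚ̄)`, all of degree ≥ 2:
    (F : S → M) (deg : M → ℕ) (h : Pt → ℝ)
    (hdeg_id : deg 1 = 1)
    (hdeg_comp : ∀ f g : M, deg (f * g) = deg f * deg g)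
    (hdeg2 : ∀ s : S, 2 ≤ deg (F s))
    (hheight_nonneg : ∀ Q : Pt, 0 ≤ h Q)
    (C : ℝ) (hC : ∀ (s : S) (Q : Pt), |h (F s • Q) - (deg (F s) : ℝ) * h Q| ≤ C)
    -- Northcott: subsets of bounded height of an orbit are finite:
    (hNorthcott : ∀ (Q : Pt) (B : ℝ), {R ∈ totalOrbit F Q | h R ≤ B}.Finite)
    -- `ν` is a strictly positive probability measure on `S`:
    (ν : Measure S)
    (hpos : ∀ s : S, 0 < ν {s})
    -- `μ = ν̄` is the i.i.d. product measure on `Φ_S = ∏_{i=1}^∞ S`: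
    (μ : Measure (ℕ → S)) [IsProbabilityMeasure μ]
    (hiid : ∀ (n : ℕ) (A : Fin n → Set S),
      μ {γ | ∀ i : Fin n, γ i ∈ A i} = ∏ i, ν (A i))
    (P : Pt) :
    -- `P` is almost surely wandering iff `E_ν̄[ĥ](Q) > 0` for all `Q ∈ Orb_S(P)`:
    (μ {γ | (seqOrbit F P γ).Finite} = 0 ↔
      ∀ Q ∈ totalOrbit F P, 0 < ∫ γ, hhat F deg h γ Q ∂μ) ∧
    -- equivalently, `P` fails to be almost surely wandering iff some point of
    -- `Orb_S(P)` has finite `S`-orbit: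
    (¬ μ {γ | (seqOrbit F P γ).Finite} = 0 ↔
      ∃ Q ∈ totalOrbit F P, (totalOrbit F Q).Finite) := by
  let d : M →* ℕ := ⟨⟨deg, hdeg_id⟩, hdeg_comp⟩
  have hheight_pos_iff : ∀ Q, 0 < ∫ γ, hhat F deg h γ Q ∂μ ↔ ¬ (totalOrbit F Q).Finite :=
    fun Q => by
      rw [← integral_hhat_eq_zero_iff (deg := d) hdeg2 hC hiid hpos hheight_nonneg
        (hNorthcott Q C)]
      exact (integral_nonneg fun γ => hhat_nonneg (deg := d) hdeg2 hC hheight_nonneg γ Q).lt_iff_ne'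
  have hwandering := measure_seqOrbit_finite_ne_zero_iff (deg := d) hdeg2 hC hiid hpos
    (hNorthcott P C)
  refine ⟨?_, hwandering⟩
  rw [← not_iff_not]
  simpa only [hheight_pos_iff, not_forall, not_not, exists_prop] using hwandering

theorem almost_surely_wandering_iff_expected_canonical_height_pos
    {S Pt M : Type*} [Monoid M] [MulAction M Pt] [Fintype S]
    [MeasurableSpace S] [DiscreteMeasurableSpace S]
    -- the finite set `S` of endomorphisms of `ℙ^N(ℚ̄)`, all of degree ≥ 2:
    (F : S → M) (deg : M → ℕ) (h : Pt → ℝ)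
    (hdeg_id : deg 1 = 1)
    (hdeg_comp : ∀ f g : M, deg (f * g) = deg f * deg g)
    (hdeg2 : ∀ s : S, 2 ≤ deg (F s))
    (hheight_nonneg : ∀ Q : Pt, 0 ≤ h Q)
    (C : ℝ) (hC : ∀ (s : S) (Q : Pt), |h (F s • Q) - (deg (F s) : ℝ) * h Q| ≤ C)
    -- Northcott: subsets of bounded height of an orbit are finite:
    (hNorthcott : ∀ (Q : Pt) (B : ℝ), {R ∈ totalOrbit F Q | h R ≤ B}.Finite)
    -- `ν` is a strictly positive probability measure on `S`:
    (ν : Measure S) [IsProbabilityMeasure ν]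
    (hpos : ∀ s : S, 0 < ν {s})
    -- `μ = ν̄` is the i.i.d. product measure on `Φ_S = ∏_{i=1}^∞ S`:
    (μ : Measure (ℕ → S)) [IsProbabilityMeasure μ]
    (hiid : ∀ (n : ℕ) (A : Fin n → Set S),
      μ {γ | ∀ i : Fin n, γ i ∈ A i} = ∏ i, ν (A i))
    (P : Pt) :
    -- `P` is almost surely wandering iff `E_ν̄[ĥ](Q) > 0` for all `Q ∈ Orb_S(P)`:
    (μ {γ | (seqOrbit F P γ).Finite} = 0 ↔
      ∀ Q ∈ totalOrbit F P, 0 < ∫ γ, hhat F deg h γ Q ∂μ) ∧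
    -- equivalently, `P` fails to be almost surely wandering iff some point of
    -- `Orb_S(P)` has finite `S`-orbit:
    (¬ μ {γ | (seqOrbit F P γ).Finite} = 0 ↔
      ∃ Q ∈ totalOrbit F P, (totalOrbit F Q).Finite) :=
  almost_surely_wandering_iff_expected_canonical_height_pos_general F deg h hdeg_id hdeg_comp hdeg2
    hheight_nonneg C hC hNorthcott ν hpos μ hiid P
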